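/- Let X and Y be positive definite complex n×n matrices. (a) If N is a Hermitian complex n×n matrix such that the block matrix fromBlocks X N N Y (i.e., [[X, N],[N, Y]]) is positive semidefinite, then N ≤ G_{1/2}(X,Y). (b) Conversely, the block matrix [[X, G_{1/2}(X,Y)],[G_{1/2}(X,Y), Y]] is positive semidefinite. -/

import Mathlib

open Matrix Kronecker
open scoped ComplexOrder

noncomputable section

/-- Apply a real function to a complex matrix via the spectral decomposition
(meaningful for Hermitian matrices; defined as `0` otherwise). -/
def matFun {n : Type*} [Fintype n] [DecidableEq n]
    (f : ℝ → ℝ) (A : Matrix n n ℂ) : Matrix n n ℂ :=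
  if hA : A.IsHermitian then
    (hA.eigenvectorUnitary : Matrix n n ℂ) *
      Matrix.diagonal (fun i => (f (hA.eigenvalues i) : ℂ)) *
      (hA.eigenvectorUnitary : Matrix n n ℂ)ᴴ
  else 0

/-- Real power of a matrix (via the spectral decomposition). -/
def mpow {n : Type*} [Fintype n] [DecidableEq n] (A : Matrix n n ℂ) (t : ℝ) :
    Matrix n n ℂ :=
  matFun (fun x => x ^ t) A

/-- Logarithm of a matrix (via the spectral decomposition). -/
def mlog {n : Type*} [Fintype n] [DecidableEq n] (A : Matrix n n ℂ) : Matrix n n ℂ :=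
  matFun Real.log A

/-- The operator relative entropy `D_op(X‖Y) = X^{1/2} log(X^{1/2} Y⁻¹ X^{1/2}) X^{1/2}`. -/
def Dop {n : Type*} [Fintype n] [DecidableEq n] (X Y : Matrix n n ℂ) : Matrix n n ℂ :=
  mpow X (1/2) * mlog (mpow X (1/2) * Y⁻¹ * mpow X (1/2)) * mpow X (1/2)

/-- The Belavkin--Staszewski relative entropy `D̂(ρ‖σ) = Re Tr[D_op(ρ‖σ)]`. -/
def BSEntropy {n : Type*} [Fintype n] [DecidableEq n] (ρ σ : Matrix n n ℂ) : ℝ :=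
  (Dop ρ σ).trace.re

/-- The weighted matrix geometric mean `G_t(X,Y) = X^{1/2} (X^{-1/2} Y X^{-1/2})^t X^{1/2}`. -/
def geoMean {n : Type*} [Fintype n] [DecidableEq n] (t : ℝ) (X Y : Matrix n n ℂ) :
    Matrix n n ℂ :=
  mpow X (1/2) * mpow (mpow X (-(1/2)) * Y * mpow X (-(1/2))) t * mpow X (1/2)

/-- Partial trace over the second (B) factor. -/
def ptraceB {R B : Type*} [Fintype B] (M : Matrix (R × B) (R × B) ℂ) : Matrix R R ℂ :=
  Matrix.of fun r r' => ∑ b, M (r, b) (r', b)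

/-- Partial trace over the first (R) factor. -/
def ptraceR {R A : Type*} [Fintype R] (M : Matrix (R × A) (R × A) ℂ) : Matrix A A ℂ :=
  Matrix.of fun a a' => ∑ r, M (r, a) (r, a')

/-- The map associated to a Choi matrix `J` (indexed by `(A × B) × (A × B)`), applied to a
matrix indexed by `(R × A) × (R × A)`. -/
def choiMap {R A B : Type*} [Fintype A] (J : Matrix (A × B) (A × B) ℂ)
    (X : Matrix (R × A) (R × A) ℂ) : Matrix (R × B) (R × B) ℂ :=
  Matrix.of fun p q => ∑ a, ∑ a', X (p.1, a) (q.1, a') * J (a, p.2) (a', q.2)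


/-!
Congruence by `X^{-1/2} ⊕ X^{-1/2}` reduces everything to `X = 1`: with `A = X^{-1/2} N X^{-1/2}`
and `M = X^{-1/2} Y X^{-1/2}`, the block matrix `[[1, A], [A, M]]` is positive semidefinite iff
`A² ≤ M` (Schur complement), and `G_{1/2}(X, Y) = X^{1/2} M^{1/2} X^{1/2}`. For (a), operator
monotonicity of the square root gives `A ≤ |A| = (A²)^{1/2} ≤ M^{1/2}`; for (b), `A = M^{1/2}`
satisfies `A² = M`, and conjugating back by `X^{1/2} ⊕ X^{1/2}` gives the claim.
-/

-- The L2 operator norm supplies the C⋆-algebra structure behind `CFC.monotone_sqrt`.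
open scoped MatrixOrder Matrix.Norms.L2Operator

theorem CFC.le_sqrt_of_mul_self_le {A : Type*} [NonUnitalCStarAlgebra A] [PartialOrder A]
    [StarOrderedRing A] {a b : A} (ha : IsSelfAdjoint a) (h : a * a ≤ b) :
    a ≤ CFC.sqrt b :=
  calc a ≤ CFC.abs a := by
        rw [← sub_nonneg, CFC.abs_sub_self a]
        exact smul_nonneg zero_le_two (CFC.negPart_nonneg a)
    _ = CFC.sqrt (a * a) := by rw [CFC.abs, ha.star_eq]
    _ ≤ CFC.sqrt b := CFC.sqrt_le_sqrt _ _ h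

namespace Matrix

theorem PosSemidef.fromBlocks_conjTranspose_mul_mul_same {m n m' n' R : Type*} [Fintype m]
    [Fintype n] [Fintype m'] [Fintype n'] [CommRing R] [PartialOrder R] [StarRing R]
    [StarOrderedRing R] {A : Matrix m m R} {B : Matrix m n R} {C : Matrix n m R}
    {D : Matrix n n R} (h : (fromBlocks A B C D).PosSemidef) (P : Matrix m m' R)
    (Q : Matrix n n' R) :
    (fromBlocks (Pᴴ * A * P) (Pᴴ * B * Q) (Qᴴ * C * P) (Qᴴ * D * Q)).PosSemidef := by
  simpa [fromBlocks_conjTranspose, fromBlocks_multiply] using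
    h.conjTranspose_mul_mul_same (fromBlocks P 0 0 Q)

theorem posSemidef_fromBlocks_one_iff {m n 𝕜 : Type*} [Fintype m] [Fintype n] [DecidableEq m]
    [RCLike 𝕜] {A : Matrix m n 𝕜} {M : Matrix n n 𝕜} :
    (fromBlocks 1 A Aᴴ M).PosSemidef ↔ Aᴴ * A ≤ M := by
  let _ : Invertible (1 : Matrix m m 𝕜) := invertibleOne
  rw [PosDef.fromBlocks₁₁ A M PosDef.one, inv_one, Matrix.mul_one]
  rfl

variable {n : Type*} [Fintype n] [DecidableEq n]

theorem IsHermitian.matFun_eq_cfc {A : Matrix n n ℂ} (hA : A.IsHermitian) (f : ℝ → ℝ) :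
    matFun f A = cfc f A := by
  rw [hA.cfc_eq, IsHermitian.cfc, matFun, dif_pos hA, Unitary.conjStarAlgAut_apply]
  rfl

theorem isHermitian_mpow {A : Matrix n n ℂ} (hA : A.IsHermitian) (t : ℝ) :
    (mpow A t).IsHermitian := by
  rw [mpow, hA.matFun_eq_cfc]
  exact cfc_predicate _ A

theorem IsHermitian.mpow_zero {A : Matrix n n ℂ} (hA : A.IsHermitian) : mpow A 0 = 1 := by
  simp only [mpow, hA.matFun_eq_cfc, Real.rpow_zero, cfc_const_one ℝ A]

theorem IsHermitian.mpow_one {A : Matrix n n ℂ} (hA : A.IsHermitian) : mpow A 1 = A := by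
  simp only [mpow, hA.matFun_eq_cfc, Real.rpow_one, cfc_id' ℝ A]

theorem PosDef.mpow_mul_mpow {A : Matrix n n ℂ} (hA : A.PosDef) (s t : ℝ) :
    mpow A s * mpow A t = mpow A (s + t) := by
  simp only [mpow, hA.isHermitian.matFun_eq_cfc]
  have hfin := A.finite_real_spectrum
  rw [← cfc_mul _ _ A (hfin.continuousOn _) (hfin.continuousOn _)]
  exact cfc_congr fun x hx => (Real.rpow_add (hA.isStrictlyPositive.spectrum_pos hx) s t).symm

theorem PosDef.mpow_mul_mpow_neg {A : Matrix n n ℂ} (hA : A.PosDef) (t : ℝ) :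
    mpow A t * mpow A (-t) = 1 := by
  rw [hA.mpow_mul_mpow, add_neg_cancel, hA.isHermitian.mpow_zero]

theorem PosDef.mpow_neg_mul_mpow {A : Matrix n n ℂ} (hA : A.PosDef) (t : ℝ) :
    mpow A (-t) * mpow A t = 1 := by
  rw [hA.mpow_mul_mpow, neg_add_cancel, hA.isHermitian.mpow_zero]

theorem PosDef.mpow_half_mul_mpow_half {A : Matrix n n ℂ} (hA : A.PosDef) :
    mpow A (1 / 2) * mpow A (1 / 2) = A := by
  rw [hA.mpow_mul_mpow, add_halves, hA.isHermitian.mpow_one]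

theorem PosDef.mpow_half_mul_conj_mpow_neg_half_mul_mpow_half {A : Matrix n n ℂ}
    (hA : A.PosDef) (Z : Matrix n n ℂ) :
    mpow A (1 / 2) * (mpow A (-(1 / 2)) * Z * mpow A (-(1 / 2))) * mpow A (1 / 2) = Z := by
  simp only [← mul_assoc, hA.mpow_mul_mpow_neg, one_mul]
  rw [mul_assoc, hA.mpow_neg_mul_mpow, mul_one]

theorem PosSemidef.mpow_half_eq_sqrt {A : Matrix n n ℂ} (hA : A.PosSemidef) :
    mpow A (1 / 2) = CFC.sqrt A := by
  rw [mpow, hA.isHermitian.matFun_eq_cfc, CFC.sqrt_eq_real_sqrt A (nonneg_iff_posSemidef.mpr hA),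
    cfcₙ_eq_cfc]
  exact cfc_congr (a := A) fun x _ => (Real.sqrt_eq_rpow x).symm

end Matrix

section GeoMean

variable {n : Type*} [Fintype n] [DecidableEq n]

theorem le_geoMean_half_of_posSemidef_fromBlocks {X Y N : Matrix n n ℂ} (hX : X.PosDef)
    (hN : N.IsHermitian) (h : (fromBlocks X N N Y).PosSemidef) : N ≤ geoMean (1 / 2) X Y := by
  set S := mpow X (1 / 2)
  set T := mpow X (-(1 / 2))
  have hS : S.IsHermitian := isHermitian_mpow hX.isHermitian _
  have hT : Tᴴ = T := (isHermitian_mpow hX.isHermitian _).eq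
  set A := T * N * T
  have hA : Aᴴ = A := by simp only [A, conjTranspose_mul, hT, hN.eq, mul_assoc]
  have hTXT : T * X * T = 1 := by
    rw [← hX.mpow_half_mul_mpow_half, ← mul_assoc, hX.mpow_neg_mul_mpow, one_mul,
      hX.mpow_mul_mpow_neg]
  have hAA : A * A ≤ T * Y * T := by
    have hnorm : (fromBlocks 1 A Aᴴ (T * Y * T)).PosSemidef := by
      rw [hA]
      simpa only [hT, hTXT] using h.fromBlocks_conjTranspose_mul_mul_same T T
    simpa only [hA] using posSemidef_fromBlocks_one_iff.mp hnorm
  have hM : (T * Y * T).PosSemidef :=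
    nonneg_iff_posSemidef.mp ((star_mul_self_nonneg A).trans (by rwa [star_eq_conjTranspose, hA]))
  calc N = S * A * S := (hX.mpow_half_mul_conj_mpow_neg_half_mul_mpow_half N).symm
    _ ≤ S * CFC.sqrt (T * Y * T) * S :=
        hS.isSelfAdjoint.conjugate_le_conjugate (CFC.le_sqrt_of_mul_self_le hA hAA)
    _ = geoMean (1 / 2) X Y := by rw [geoMean, hM.mpow_half_eq_sqrt]

theorem posSemidef_fromBlocks_geoMean_half {X Y : Matrix n n ℂ} (hX : X.PosDef)
    (hY : Y.PosSemidef) :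
    (fromBlocks X (geoMean (1 / 2) X Y) (geoMean (1 / 2) X Y) Y).PosSemidef := by
  set S := mpow X (1 / 2)
  set T := mpow X (-(1 / 2))
  have hS : Sᴴ = S := (isHermitian_mpow hX.isHermitian _).eq
  have hT : Tᴴ = T := (isHermitian_mpow hX.isHermitian _).eq
  have hM : (T * Y * T).PosSemidef := by simpa only [hT] using hY.conjTranspose_mul_mul_same T
  set K := CFC.sqrt (T * Y * T)
  have hK : Kᴴ = K := (CFC.sqrt_nonneg _).isSelfAdjoint.star_eq
  have hKK : Kᴴ * K ≤ T * Y * T := by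
    rw [hK, CFC.sqrt_mul_sqrt_self _ (nonneg_iff_posSemidef.mpr hM)]
  have := (posSemidef_fromBlocks_one_iff.mpr hKK).fromBlocks_conjTranspose_mul_mul_same S S
  rw [geoMean, hM.mpow_half_eq_sqrt]
  rwa [hS, hK, mul_one, hX.mpow_half_mul_mpow_half,
    hX.mpow_half_mul_conj_mpow_neg_half_mul_mpow_half] at this

end GeoMean

/-- semidefinite characterization of the matrix geometric mean `G_{1/2}`:
(a) if `[[X, N],[N, Y]]` is PSD for Hermitian `N`, then `N ≤ G_{1/2}(X,Y)`;
(b) `[[X, G_{1/2}(X,Y)],[G_{1/2}(X,Y), Y]]` is PSD. -/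
theorem geoMean_half_sdp_characterization {n : ℕ}
    (X Y : Matrix (Fin n) (Fin n) ℂ) (hX : X.PosDef) (hY : Y.PosDef) :
    (∀ N : Matrix (Fin n) (Fin n) ℂ, N.IsHermitian →
      (Matrix.fromBlocks X N N Y).PosSemidef → (geoMean (1/2) X Y - N).PosSemidef) ∧
    (Matrix.fromBlocks X (geoMean (1/2) X Y) (geoMean (1/2) X Y) Y).PosSemidef :=
  ⟨fun _ hN h => le_geoMean_half_of_posSemidef_fromBlocks hX hN h,
    posSemidef_fromBlocks_geoMean_half hX hY.posSemidef⟩
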